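/- arXiv:1305.1697 — 6 statements merged into one kernel-verified Lean document; each statement's English description precedes it below -/
import Mathlib

section
/- Let P be a finite partially ordered set and let M be the monoid of all functions f : P → P that are order-preserving (x ≤ y implies f(x) ≤ f(y)) and decreasing (f(x) ≤ x for all x), under composition. Then M is J-trivial: for f, g ∈ M, if M f M = M g M (as two-sided ideals) then f = g. -/
/-- The two-sided ideal `M v M` of `v` in the monoid `M` of monotone decreasing self-maps. -/
def Function.End.decreasingIdeal {P : Type*} [Preorder P] (v : Function.End P) :
    Set (Function.End P) :=
  {x | ∃ a : Function.End P, (Monotone a ∧ ∀ p, a p ≤ p) ∧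
    ∃ b : Function.End P, (Monotone b ∧ ∀ p, b p ≤ p) ∧ x = a * v * b}

namespace Function.End

variable {P : Type*} [Preorder P]

theorem self_mem_decreasingIdeal (v : Function.End P) : v ∈ decreasingIdeal v :=
  have one_mem : Monotone (1 : Function.End P) ∧ ∀ p, (1 : Function.End P) p ≤ p :=
    ⟨monotone_id, fun _ => le_rfl⟩
  ⟨1, one_mem, 1, one_mem, by rw [one_mul, mul_one]⟩

theorem apply_le_of_mem_decreasingIdeal {u v : Function.End P} (hv : Monotone v)
    (hu : u ∈ decreasingIdeal v) (x : P) : u x ≤ v x := by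
  obtain ⟨a, ⟨-, ha⟩, b, ⟨-, hb⟩, rfl⟩ := hu
  exact (ha _).trans (hv (hb x))

end Function.End

theorem stmt4_general (P : Type*) [PartialOrder P]
    (f g : Function.End P)
    (hf : Monotone f ∧ ∀ x, f x ≤ x) (hg : Monotone g ∧ ∀ x, g x ≤ x)
    (hJ : {x : Function.End P |
            ∃ a : Function.End P, (Monotone a ∧ ∀ p, a p ≤ p) ∧
              ∃ b : Function.End P, (Monotone b ∧ ∀ p, b p ≤ p) ∧ x = a * f * b} =
          {x : Function.End P |
            ∃ a : Function.End P, (Monotone a ∧ ∀ p, a p ≤ p) ∧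
              ∃ b : Function.End P, (Monotone b ∧ ∀ p, b p ≤ p) ∧ x = a * g * b}) :
    f = g := by
  change Function.End.decreasingIdeal f = Function.End.decreasingIdeal g at hJ
  have hfg := Function.End.apply_le_of_mem_decreasingIdeal hg.1
    (hJ ▸ Function.End.self_mem_decreasingIdeal f)
  have hgf := Function.End.apply_le_of_mem_decreasingIdeal hf.1
    (hJ ▸ Function.End.self_mem_decreasingIdeal g)
  exact funext fun x => le_antisymm (hfg x) (hgf x)

/-- the monoid of order-preserving decreasing self-maps of a finite poset
is J-trivial: equality of two-sided ideals implies equality of elements. -/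
theorem stmt4 (P : Type*) [Fintype P] [PartialOrder P]
    (f g : Function.End P)
    (hf : Monotone f ∧ ∀ x, f x ≤ x) (hg : Monotone g ∧ ∀ x, g x ≤ x)
    (hJ : {x : Function.End P |
            ∃ a : Function.End P, (Monotone a ∧ ∀ p, a p ≤ p) ∧
              ∃ b : Function.End P, (Monotone b ∧ ∀ p, b p ≤ p) ∧ x = a * f * b} =
          {x : Function.End P |
            ∃ a : Function.End P, (Monotone a ∧ ∀ p, a p ≤ p) ∧
              ∃ b : Function.End P, (Monotone b ∧ ∀ p, b p ≤ p) ∧ x = a * g * b}) :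
    f = g :=
  stmt4_general P f g hf hg hJ
end

section
/- Let M be a finite monoid. M is R-trivial (i.e., aM = bM implies a = b) if and only if for every idempotent e ∈ M and for all x ∈ M with e ∈ M x M, one has e x = e. -/
/-- In a finite monoid every element has an idempotent positive power. -/
lemma exists_idem_pow {M : Type*} [Monoid M] [Finite M] (u : M) :
    ∃ n : ℕ, 0 < n ∧ IsIdempotentElem (u ^ n) := by
  obtain ⟨m, k, hne, h⟩ := Finite.exists_ne_map_eq_of_infinite (fun n : ℕ => u ^ n)
  wlog hmk : m < k generalizing m k
  · exact this k m hne.symm h.symm (by omega)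
  set r := k - m with hr
  have hr1 : 0 < r := by omega
  have step : ∀ i, m ≤ i → u ^ (i + r) = u ^ i := by
    intro i hi
    have : u ^ (i + r) = u ^ (m + r) * u ^ (i - m) := by
      rw [← pow_add]; congr 1; omega
    rw [this]
    have hk : m + r = k := by omega
    rw [hk, ← h, ← pow_add]
    congr 1; omega
  have key : ∀ t i, m ≤ i → u ^ (i + t * r) = u ^ i := by
    intro t
    induction t with
    | zero => simp
    | succ t ih =>
        intro i hi
        have : i + (t + 1) * r = (i + r) + t * r := by ring
        rw [this, ih (i + r) (by omega), step i hi]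
  refine ⟨(m + 1) * r, by positivity, ?_⟩
  unfold IsIdempotentElem
  rw [← pow_add]
  have : (m + 1) * r + (m + 1) * r = (m + 1) * r + (m + 1) * r := rfl
  have h1 : m ≤ (m + 1) * r := by nlinarith
  calc u ^ ((m + 1) * r + (m + 1) * r) = u ^ ((m + 1) * r) := key (m + 1) _ h1

/-- a finite monoid is R-trivial (aM = bM → a = b) iff for every
idempotent e and every x with e ∈ MxM one has ex = e. -/
theorem stmt5 (M : Type*) [Monoid M] [Finite M] :
    (∀ a b : M, {c : M | ∃ m : M, c = a * m} = {c : M | ∃ m : M, c = b * m} → a = b) ↔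
    (∀ e : M, IsIdempotentElem e → ∀ x : M, (∃ a b : M, e = a * x * b) → e * x = e) := by
  constructor
  · intro H e he x ⟨a, b, hab⟩
    -- R-trivial: if p = q * s and q = p * t then p = q
    have R : ∀ p q : M, (∃ s, p = q * s) → (∃ t, q = p * t) → p = q := by
      intro p q ⟨s, hs⟩ ⟨t, ht⟩
      apply H
      ext c
      simp only [Set.mem_setOf_eq]
      constructor
      · rintro ⟨m, rfl⟩; exact ⟨s * m, by rw [← mul_assoc, ← hs]⟩
      · rintro ⟨m, rfl⟩; exact ⟨t * m, by rw [← mul_assoc, ← ht]⟩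
    -- first: e = e * a
    have hea : e = e * a := by
      apply R
      · refine ⟨x * b, ?_⟩
        calc e = e * e := he.symm
          _ = e * (a * x * b) := by rw [← hab]
          _ = e * a * (x * b) := by rw [mul_assoc a x b, ← mul_assoc]
      · exact ⟨a, rfl⟩
    -- then: e = e * x
    have hex : e = e * x := by
      apply R
      · refine ⟨b, ?_⟩
        calc e = e * e := he.symm
          _ = e * (a * x * b) := by rw [← hab]
          _ = e * a * (x * b) := by rw [mul_assoc a x b, ← mul_assoc]
          _ = e * (x * b) := by rw [← hea]
          _ = e * x * b := by rw [mul_assoc]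
      · exact ⟨x, rfl⟩
    exact hex.symm
  · intro H a b hset
    have ha : a ∈ {c : M | ∃ m : M, c = b * m} := by
      rw [← hset]; exact ⟨1, (mul_one a).symm⟩
    have hb : b ∈ {c : M | ∃ m : M, c = a * m} := by
      rw [hset]; exact ⟨1, (mul_one b).symm⟩
    obtain ⟨m, hm⟩ := ha  -- a = b * m
    obtain ⟨n, hn⟩ := hb  -- b = a * n
    -- a = a * (n * m)
    have hu : a = a * (n * m) := by rw [← mul_assoc, ← hn, ← hm]
    obtain ⟨N, hN, hidem⟩ := exists_idem_pow (n * m)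
    have haN : ∀ k : ℕ, a = a * (n * m) ^ k := by
      intro k
      induction k with
      | zero => simp
      | succ k ih => rw [pow_succ, ← mul_assoc, ← ih]; exact hu
    -- e := (n*m)^N is idempotent and lies in M n M
    have hmem : ∃ p q : M, (n * m) ^ N = p * n * q := by
      refine ⟨1, m * (n * m) ^ (N - 1), ?_⟩
      rw [one_mul, ← mul_assoc, ← pow_succ']
      congr 1; omega
    have hen := H ((n * m) ^ N) hidem n hmem
    -- a * n = a
    have : a * n = a := by
      calc a * n = a * (n * m) ^ N * n := by rw [← haN N]
        _ = a * ((n * m) ^ N * n) := by rw [mul_assoc]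
        _ = a * (n * m) ^ N := by rw [hen]
        _ = a := (haN N).symm
    rw [hn, this]
end

section
/- Let V be the vertex poset of a finite arborescence with thresholds T_v, state space Ω, and for each vertex v let τ_v : Ω → Ω be the landslide toppling operator (which sets t_v to 0 and deposits the t_v grains one by one at the first non-full vertices along the path from v to the root, overflow exiting at the root). Then each τ_v is decreasing for the dominance order: τ_v(t) ⊴ t for all t ∈ Ω. -/
/-!
A single-grain topple either does nothing, removes the grain from `v`, or moves it from `v` to a
vertex `w < v`. None of these increases the number of grains in a principal upset `{u | x ≤ u}`,
since `x ≤ w` forces `x ≤ v`. As θ keeps configurations below the thresholds, the bound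
propagates along the iterates.
-/

/-- Dominance order on sand configurations: compare the sums over principal upsets. -/
def domRel {V : Type*} [Fintype V] [PartialOrder V]
    [DecidableRel ((· ≤ ·) : V → V → Prop)] (t t' : V → ℕ) : Prop :=
  ∀ v : V, ∑ w ∈ Finset.univ.filter (fun w => v ≤ w), t w ≤
    ∑ w ∈ Finset.univ.filter (fun w => v ≤ w), t' w

/-- Specification of the single-grain topple operator θ_v: on a valid configuration it
does nothing if `t v = 0`; otherwise it removes one grain at `v` and deposits it at the
first (largest) vertex strictly below `v` on the path to the root that is not at its
threshold, the grain exiting if all vertices below `v` are full. -/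
def stepSpec {V : Type*} [PartialOrder V] [DecidableEq V] (T : V → ℕ) (v : V)
    (θ : (V → ℕ) → (V → ℕ)) : Prop :=
  ∀ t : V → ℕ, (∀ w, t w ≤ T w) →
    (t v = 0 → θ t = t) ∧
    (0 < t v →
      ((∀ w, w < v → t w = T w) → θ t = Function.update t v (t v - 1)) ∧
      (∀ w, w < v → t w < T w → (∀ u, w < u → u < v → t u = T u) →
        θ t = Function.update (Function.update t v (t v - 1)) w (t w + 1)))

section Dominance

variable {V : Type*} [Fintype V] [PartialOrder V] [DecidableRel ((· ≤ ·) : V → V → Prop)]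
  {t t' t'' : V → ℕ}

theorem domRel_refl (t : V → ℕ) : domRel t t := fun _ => le_rfl

theorem domRel.trans (h : domRel t t') (h' : domRel t' t'') : domRel t t'' :=
  fun x => (h x).trans (h' x)

theorem domRel_of_le (h : t ≤ t') : domRel t t' :=
  fun _ => Finset.sum_le_sum fun w _ => h w

/-- Every principal upset containing `w` also contains `v`. -/
theorem domRel_of_add_single_eq [DecidableEq V] {v w : V} (hwv : w ≤ v)
    (h : t + Pi.single v 1 = t' + Pi.single w 1) : domRel t t' := by
  intro x
  have hsum := congrArg (fun f : V → ℕ => ∑ u ∈ Finset.univ.filter (fun u => x ≤ u), f u) h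
  simp only [Pi.add_apply, Finset.sum_add_distrib, Finset.sum_pi_single', Finset.mem_filter,
    Finset.mem_univ, true_and] at hsum
  by_cases hxw : x ≤ w
  · simp only [hxw, hxw.trans hwv, if_true] at hsum
    omega
  · split_ifs at hsum <;> omega

end Dominance

namespace stepSpec

variable {V : Type*} [PartialOrder V] [DecidableEq V] {T : V → ℕ} {v : V}
  {θ : (V → ℕ) → (V → ℕ)} {t : V → ℕ}

/-- The vertex receiving the grain is a maximal non-full vertex below `v`. -/
theorem apply_eq_or [Finite V] (hθ : stepSpec T v θ) (ht : ∀ w, t w ≤ T w) :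
    θ t = t ∨ 0 < t v ∧ (θ t = Function.update t v (t v - 1) ∨
      ∃ w < v, t w < T w ∧
        θ t = Function.update (Function.update t v (t v - 1)) w (t w + 1)) := by
  obtain ⟨hzero, hpos⟩ := hθ t ht
  rcases Nat.eq_zero_or_pos (t v) with htv | htv
  · exact Or.inl (hzero htv)
  obtain ⟨hexit, hdeposit⟩ := hpos htv
  refine Or.inr ⟨htv, ?_⟩
  set S : Set V := {w | w < v ∧ t w < T w}
  rcases S.eq_empty_or_nonempty with hS | hS
  · refine Or.inl (hexit fun w hwv => ?_)
    by_contra hne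
    exact hS.subset ⟨hwv, (ht w).lt_of_ne hne⟩
  · obtain ⟨w, ⟨hwv, hwT⟩, hmax⟩ := S.toFinite.exists_maximal hS
    refine Or.inr ⟨w, hwv, hwT, hdeposit w hwv hwT fun u hwu huv => ?_⟩
    by_contra hne
    exact hwu.not_ge (hmax ⟨huv, (ht u).lt_of_ne hne⟩ hwu.le)

theorem apply_le_threshold [Finite V] (hθ : stepSpec T v θ) (ht : ∀ w, t w ≤ T w) (x : V) :
    θ t x ≤ T x := by
  rcases hθ.apply_eq_or ht with h | ⟨-, h | ⟨w, -, hwT, h⟩⟩ <;> rw [h]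
  · exact ht x
  all_goals
    simp only [Function.update_apply]
    split_ifs <;> grind

variable [Fintype V] [DecidableRel ((· ≤ ·) : V → V → Prop)]

theorem domRel_apply (hθ : stepSpec T v θ) (ht : ∀ w, t w ≤ T w) : domRel (θ t) t := by
  rcases hθ.apply_eq_or ht with h | ⟨htv, h | ⟨w, hwv, -, h⟩⟩ <;> rw [h]
  · exact domRel_refl t
  · exact domRel_of_le (update_le_iff.2 ⟨Nat.sub_le _ _, fun _ _ => le_rfl⟩)
  · refine domRel_of_add_single_eq hwv.le (funext fun x => ?_)
    simp only [Pi.add_apply, Function.update_apply, Pi.single_apply]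
    split_ifs <;> grind

theorem domRel_iterate (hθ : stepSpec T v θ) (ht : ∀ w, t w ≤ T w) (n : ℕ) :
    domRel (θ^[n] t) t := by
  have hmaps : Set.MapsTo θ {t | ∀ w, t w ≤ T w} {t | ∀ w, t w ≤ T w} :=
    fun _ ht => hθ.apply_le_threshold ht
  induction n with
  | zero => exact domRel_refl t
  | succ n ih =>
    rw [Function.iterate_succ_apply']
    exact (hθ.domRel_apply (hmaps.iterate n ht)).trans ih

end stepSpec

theorem stmt8_general (V : Type*) [Fintype V] [PartialOrder V] [DecidableEq V]
    [DecidableRel ((· ≤ ·) : V → V → Prop)]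
    (T : V → ℕ) (v : V)
    (θ : (V → ℕ) → (V → ℕ)) (hθ : stepSpec T v θ)
    (t : V → ℕ) (ht : ∀ w, t w ≤ T w) :
    domRel (θ^[T v] t) t :=
  hθ.domRel_iterate ht (T v)

/-- the landslide topple operator τ_v = θ_v^{T_v} is decreasing for the
dominance order: τ_v(t) ⊴ t. -/
theorem stmt8 (V : Type*) [Fintype V] [PartialOrder V] [DecidableEq V]
    [DecidableRel ((· ≤ ·) : V → V → Prop)]
    (hroot : ∃ r : V, ∀ v, r ≤ v)
    (hchain : ∀ v : V, IsChain (· ≤ ·) {w | w ≤ v})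
    (T : V → ℕ) (hT : ∀ v, 1 ≤ T v) (v : V)
    (θ : (V → ℕ) → (V → ℕ)) (hθ : stepSpec T v θ)
    (t : V → ℕ) (ht : ∀ w, t w ≤ T w) :
    domRel (θ^[T v] t) t :=
  stmt8_general V T v θ hθ t ht
end

section
/- Let V be the vertex poset of a finite arborescence with thresholds, state space Ω, and let θ_v be the single-grain topple operator at vertex v. Then θ_v preserves the dominance order: if t ⊴ t' then θ_v(t) ⊴ θ_v(t'). -/
open Finset

-- Stated additively, with `Pi.single`, to avoid the truncated subtraction `t v - 1`.
theorem stepSpec.trichotomy {V : Type*} [Fintype V] [PartialOrder V] [DecidableEq V]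
    {T : V → ℕ} {v : V} {θ : (V → ℕ) → (V → ℕ)}
    (hθ : stepSpec T v θ) {t : V → ℕ} (ht : ∀ w, t w ≤ T w) :
    (t v = 0 ∧ θ t = t) ∨
    (0 < t v ∧ (∀ x, x < v → t x = T x) ∧ θ t + Pi.single v 1 = t) ∨
    (∃ w < v, 0 < t v ∧ t w < T w ∧ (∀ x, w < x → x < v → t x = T x) ∧
      θ t + Pi.single v 1 = t + Pi.single w 1) := by
  classical
  obtain ⟨hzero, hpos⟩ := hθ t ht
  rcases (t v).eq_zero_or_pos with h0 | h0
  · exact Or.inl ⟨h0, hzero h0⟩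
  obtain ⟨hexit, hpass⟩ := hpos h0
  by_cases hfull : ∀ x, x < v → t x = T x
  · refine Or.inr (Or.inl ⟨h0, hfull, ?_⟩)
    rw [hexit hfull]
    ext x
    rcases eq_or_ne x v with rfl | hx
    · simp only [Pi.add_apply, Function.update_self, Pi.single_eq_same]
      omega
    · simp [hx]
  simp only [not_forall] at hfull
  obtain ⟨x, hxv, hx⟩ := hfull
  obtain ⟨w, hw⟩ := (univ.filter fun x => x < v ∧ t x < T x).exists_maximal
    ⟨x, by simpa using ⟨hxv, (ht x).lt_of_ne hx⟩⟩
  simp only [mem_filter, mem_univ, true_and] at hw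
  have hbetween : ∀ x, w < x → x < v → t x = T x := fun x hwx hxv =>
    ((ht x).eq_or_lt.resolve_right fun hlt => hw.not_gt ⟨hxv, hlt⟩ hwx)
  refine Or.inr (Or.inr ⟨w, hw.prop.1, h0, hw.prop.2, hbetween, ?_⟩)
  rw [hpass w hw.prop.1 hw.prop.2 hbetween]
  ext x
  rcases eq_or_ne x v with rfl | hxv
  · simp only [Pi.add_apply, Function.update_of_ne hw.prop.1.ne', Function.update_self,
      Pi.single_eq_same, Pi.single_eq_of_ne hw.prop.1.ne', add_zero]
    omega
  rcases eq_or_ne x w with rfl | hxw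
  · simp [hxv]
  · simp [hxv, hxw]

section

variable {V : Type*} [Fintype V] [PartialOrder V] [DecidableRel ((· ≤ ·) : V → V → Prop)]

def upSum (u : V) (t : V → ℕ) : ℕ :=
  ∑ w ∈ univ.filter (fun w => u ≤ w), t w

theorem upSum_add (u : V) (f g : V → ℕ) : upSum u (f + g) = upSum u f + upSum u g :=
  sum_add_distrib

theorem upSum_single [DecidableEq V] (u a : V) :
    upSum u (Pi.single a 1) = if u ≤ a then 1 else 0 := by
  simp [upSum]

theorem sum_le_sum_of_isUpperSet (hchain : ∀ v : V, IsChain (· ≤ ·) {w | w ≤ v})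
    {t t' : V → ℕ} (hdom : domRel t t') (U : Finset V) (hU : IsUpperSet (U : Set V)) :
    ∑ x ∈ U, t x ≤ ∑ x ∈ U, t' x := by
  classical
  induction U using Finset.strongInduction with
  | H U ih =>
  rcases U.eq_empty_or_nonempty with rfl | hne
  · simp
  obtain ⟨m, hm⟩ := U.exists_minimal hne
  have hIci : univ.filter (fun w => m ≤ w) ⊆ U := fun x hx => hU (mem_filter.1 hx).2 hm.prop
  have hrest : IsUpperSet ((U \ univ.filter (fun w => m ≤ w) : Finset V) : Set V) := by
    intro x y hxy hx
    simp only [coe_sdiff, Set.mem_sdiff, mem_coe, coe_filter, mem_univ, true_and,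
      Set.mem_ofPred_eq] at hx ⊢
    refine ⟨hU hxy hx.1, fun hmy => ?_⟩
    rcases (hchain y).total hxy hmy with hxm | hmx
    · exact hx.2 (hm.2 hx.1 hxm)
    · exact hx.2 hmx
  rw [← sum_sdiff hIci, ← sum_sdiff hIci (f := t')]
  exact add_le_add (ih _ (sdiff_ssubset hIci ⟨m, by simp⟩) hrest) (hdom m)

theorem upSum_lt_upSum (hchain : ∀ v : V, IsChain (· ≤ ·) {w | w ≤ v})
    {t t' : V → ℕ} (hdom : domRel t t') {u a : V} (hua : u ≤ a)
    (hle : ∀ x, u ≤ x → x ≤ a → t x ≤ t' x) (hlt : t a < t' a) :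
    upSum u t < upSum u t' := by
  unfold upSum
  rw [← sum_filter_add_sum_filter_not _ (fun x => x ≤ a) t,
    ← sum_filter_add_sum_filter_not _ (fun x => x ≤ a) t']
  refine add_lt_add_of_lt_of_le ?_ (sum_le_sum_of_isUpperSet hchain hdom _ ?_)
  · refine sum_lt_sum (fun x hx => ?_) ⟨a, by simp [hua], hlt⟩
    simp only [mem_filter, mem_univ, true_and] at hx
    exact hle x hx.1 hx.2
  · intro x y hxy hx
    simp only [coe_filter, mem_filter, mem_univ, true_and, Set.mem_ofPred_eq] at hx ⊢
    exact ⟨hx.1.trans hxy, fun hya => hx.2 (hxy.trans hya)⟩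

theorem stepSpec.upSum_eq_of_not_le [DecidableEq V] {T : V → ℕ} {v : V}
    {θ : (V → ℕ) → (V → ℕ)} (hθ : stepSpec T v θ) {t : V → ℕ} (ht : ∀ w, t w ≤ T w)
    {u : V} (huv : ¬ u ≤ v) : upSum u (θ t) = upSum u t := by
  rcases hθ.trichotomy ht with ⟨-, h⟩ | ⟨-, -, h⟩ | ⟨w, hwv, -, -, -, h⟩
  · rw [h]
  · simpa [upSum_add, upSum_single, huv] using congrArg (upSum u) h
  · have huw : ¬ u ≤ w := fun huw => huv (huw.trans hwv.le)
    simpa [upSum_add, upSum_single, huv, huw] using congrArg (upSum u) h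

theorem stepSpec.upSum_of_le [DecidableEq V] (hchain : ∀ v : V, IsChain (· ≤ ·) {w | w ≤ v})
    {T : V → ℕ} {v : V} {θ : (V → ℕ) → (V → ℕ)} (hθ : stepSpec T v θ) {t : V → ℕ}
    (ht : ∀ w, t w ≤ T w) {u : V} (huv : u ≤ v) :
    (upSum u (θ t) = upSum u t ∧ (t v = 0 ∨ ∃ w, u ≤ w ∧ w < v ∧ t w < T w)) ∨
    (upSum u (θ t) + 1 = upSum u t ∧ 0 < t v ∧ ∀ x, u ≤ x → x < v → t x = T x) := by
  rcases hθ.trichotomy ht with ⟨h0, h⟩ | ⟨hpos, hfull, h⟩ | ⟨w, hwv, hpos, hw, hfull, h⟩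
  · exact Or.inl ⟨by rw [h], Or.inl h0⟩
  · refine Or.inr ⟨?_, hpos, fun x _ hxv => hfull x hxv⟩
    simpa [upSum_add, upSum_single, huv] using congrArg (upSum u) h
  have hsum := congrArg (upSum u) h
  simp only [upSum_add, upSum_single, huv, if_true] at hsum
  by_cases huw : u ≤ w
  · exact Or.inl ⟨by simpa [huw] using hsum, Or.inr ⟨w, huw, hwv, hw⟩⟩
  refine Or.inr ⟨by simpa [huw] using hsum, hpos, fun x hux hxv => hfull x ?_ hxv⟩
  rcases (hchain v).total hxv.le hwv.le with hxw | hwx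
  · exact absurd (hux.trans hxw) huw
  · exact hwx.lt_of_ne (by rintro rfl; exact huw hux)

theorem upSum_lt_upSum_of_full (hchain : ∀ v : V, IsChain (· ≤ ·) {w | w ≤ v}) {T t t' : V → ℕ}
    (ht : ∀ w, t w ≤ T w) (hdom : domRel t t') {u v : V} (huv : u ≤ v)
    (hroom : t v = 0 ∨ ∃ w, u ≤ w ∧ w < v ∧ t w < T w) (hv' : 0 < t' v)
    (hfull' : ∀ x, u ≤ x → x < v → t' x = T x) : upSum u t < upSum u t' := by
  rcases hroom with h0 | ⟨w, huw, hwv, hw⟩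
  · refine upSum_lt_upSum hchain hdom huv (fun x hux hxv => ?_) (by omega)
    rcases hxv.eq_or_lt with rfl | hxv
    · omega
    · rw [hfull' x hux hxv]; exact ht x
  · refine upSum_lt_upSum hchain hdom huw (fun x hux hxw => ?_) ?_
    · rw [hfull' x hux (hxw.trans_lt hwv)]; exact ht x
    · rwa [hfull' w huw hwv]

end

theorem stmt9_general (V : Type*) [Fintype V] [PartialOrder V] [DecidableEq V]
    [DecidableRel ((· ≤ ·) : V → V → Prop)]
    (hchain : ∀ v : V, IsChain (· ≤ ·) {w | w ≤ v})
    (T : V → ℕ) (v : V)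
    (θ : (V → ℕ) → (V → ℕ)) (hθ : stepSpec T v θ)
    (t t' : V → ℕ) (ht : ∀ w, t w ≤ T w) (ht' : ∀ w, t' w ≤ T w)
    (hdom : domRel t t') :
    domRel (θ t) (θ t') := by
  intro u
  change upSum u (θ t) ≤ upSum u (θ t')
  have hu : upSum u t ≤ upSum u t' := hdom u
  by_cases huv : u ≤ v
  · rcases hθ.upSum_of_le hchain ht' huv with ⟨h', -⟩ | ⟨h', hv', hfull'⟩
    · rcases hθ.upSum_of_le hchain ht huv with ⟨h, -⟩ | ⟨h, -⟩ <;> omega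
    rcases hθ.upSum_of_le hchain ht huv with ⟨h, hroom⟩ | ⟨h, -⟩
    · have := upSum_lt_upSum_of_full hchain ht hdom huv hroom hv' hfull'
      omega
    · omega
  · rw [hθ.upSum_eq_of_not_le ht huv, hθ.upSum_eq_of_not_le ht' huv]
    exact hu

/-- the single-grain topple operator θ_v preserves the dominance order:
t ⊴ t' implies θ_v(t) ⊴ θ_v(t'). -/
theorem stmt9 (V : Type*) [Fintype V] [PartialOrder V] [DecidableEq V]
    [DecidableRel ((· ≤ ·) : V → V → Prop)]
    (hroot : ∃ r : V, ∀ v, r ≤ v)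
    (hchain : ∀ v : V, IsChain (· ≤ ·) {w | w ≤ v})
    (T : V → ℕ) (hT : ∀ v, 1 ≤ T v) (v : V)
    (θ : (V → ℕ) → (V → ℕ)) (hθ : stepSpec T v θ)
    (t t' : V → ℕ) (ht : ∀ w, t w ≤ T w) (ht' : ∀ w, t' w ≤ T w)
    (hdom : domRel t t') :
    domRel (θ t) (θ t') :=
  stmt9_general V hchain T v θ hθ t t' ht ht' hdom
end

section
/- Let V be the vertex poset of a finite arborescence, Ω the state space with thresholds T_v, and σ_v : Ω → Ω the source operator at v, which adds one grain at the first non-full vertex on the path from v down to the root (doing nothing if all are full). Then the operators {σ_v : v ∈ V} pairwise commute and each σ_v is increasing for the dominance order: t ⊴ σ_v(t) for all t. -/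
/-- Specification of the source operator σ_v: on a valid configuration it adds one
grain at the first (largest) vertex ≤ v on the path from v to the root that is not at
its threshold, and does nothing if that whole path is full. -/
def sourceSpec {V : Type*} [PartialOrder V] [DecidableEq V] (T : V → ℕ) (v : V)
    (σ : (V → ℕ) → (V → ℕ)) : Prop :=
  ∀ t : V → ℕ, (∀ w, t w ≤ T w) →
    ((∀ w, w ≤ v → t w = T w) → σ t = t) ∧
    (∀ w, w ≤ v → t w < T w → (∀ u, w < u → u ≤ v → t u = T u) →
      σ t = Function.update t w (t w + 1))

/-!
On a configuration below the thresholds, a source operator `σ_v` either does nothing or adds a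
grain at the greatest non-full vertex below `v`; this vertex exists because the vertices below
`v` form a finite chain. Adding a grain can only shrink the set of non-full vertices. So if
`σ_u` and `σ_v` add at different vertices, each vertex stays the greatest non-full one for its
operator after the other step, and the two updates commute; if they add at the same vertex `a`,
afterwards every non-full vertex below `u` or `v` lies below `a`, so the non-full vertices below
`u` and below `v` coincide and `σ_u`, `σ_v` act identically. Finally `σ_v` only adds grains,
so it increases every upset sum.
-/

lemma IsChain.exists_isGreatest_of_finite {α : Type*} [PartialOrder α] {s : Set α}
    (hs : IsChain (· ≤ ·) s) (hfin : s.Finite) (hne : s.Nonempty) : ∃ a, IsGreatest s a := by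
  obtain ⟨a, ha⟩ := hfin.exists_maximal hne
  refine ⟨a, ha.prop, fun x hx => ?_⟩
  rcases eq_or_ne x a with rfl | hxa
  · exact le_rfl
  · exact (hs.total hx ha.prop).resolve_right fun hax => hxa (ha.eq_of_le hx hax).symm

lemma domRel_of_le_s10 {V : Type*} [Fintype V] [PartialOrder V]
    [DecidableRel ((· ≤ ·) : V → V → Prop)] {t t' : V → ℕ} (h : t ≤ t') : domRel t t' :=
  fun _ => Finset.sum_le_sum fun x _ => h x

lemma update_add_one_le {V : Type*} [DecidableEq V] {T t : V → ℕ} {b : V} (ht : t ≤ T)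
    (hb : t b < T b) : Function.update t b (t b + 1) ≤ T := by
  intro w
  rcases eq_or_ne w b with rfl | hwb
  · simpa using hb
  · simpa [hwb] using ht w

section Sandpile

variable {V : Type*} [PartialOrder V] {T t : V → ℕ} {u v a b : V}

def nonFullBelow (T t : V → ℕ) (v : V) : Set V := {w | w ≤ v ∧ t w < T w}

lemma exists_isGreatest_nonFullBelow [Finite V] (hchain : IsChain (· ≤ ·) {w | w ≤ v})
    (hne : (nonFullBelow T t v).Nonempty) : ∃ a, IsGreatest (nonFullBelow T t v) a :=
  (hchain.mono fun _ hw => hw.1).exists_isGreatest_of_finite (Set.toFinite _) hne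

variable [DecidableEq V] {σ : (V → ℕ) → (V → ℕ)}

lemma nonFullBelow_update_add_one_subset :
    nonFullBelow T (Function.update t b (t b + 1)) v ⊆ nonFullBelow T t v := by
  rintro w ⟨hwv, hw⟩
  refine ⟨hwv, ?_⟩
  rcases eq_or_ne w b with rfl | hwb
  · simp only [Function.update_self] at hw
    omega
  · rwa [Function.update_of_ne hwb] at hw

lemma IsGreatest.nonFullBelow_update_add_one (ha : IsGreatest (nonFullBelow T t v) a)
    (hab : a ≠ b) : IsGreatest (nonFullBelow T (Function.update t b (t b + 1)) v) a :=
  ⟨by simpa [nonFullBelow, Function.update_of_ne hab] using ha.1,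
    fun _ hx => ha.2 (nonFullBelow_update_add_one_subset hx)⟩

lemma nonFullBelow_update_add_one_subset_of_isGreatest (ha : IsGreatest (nonFullBelow T t u) a)
    (hav : a ≤ v) :
    nonFullBelow T (Function.update t a (t a + 1)) u ⊆
      nonFullBelow T (Function.update t a (t a + 1)) v :=
  fun _ hx => ⟨(ha.2 (nonFullBelow_update_add_one_subset hx)).trans hav, hx.2⟩

namespace sourceSpec

lemma apply_of_nonFullBelow_eq_empty (hσ : sourceSpec T v σ) (ht : t ≤ T)
    (h : nonFullBelow T t v = ∅) : σ t = t :=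
  (hσ t ht).1 fun w hwv => (ht w).eq_of_not_lt fun hw => h.subset ⟨hwv, hw⟩

lemma apply_of_isGreatest (hσ : sourceSpec T v σ) (ht : t ≤ T)
    (ha : IsGreatest (nonFullBelow T t v) a) : σ t = Function.update t a (t a + 1) :=
  (hσ t ht).2 a ha.1.1 ha.1.2 fun w haw hwv =>
    (ht w).eq_of_not_lt fun hw => not_lt_of_ge (ha.2 ⟨hwv, hw⟩) haw

lemma apply_cases [Finite V] (hchain : IsChain (· ≤ ·) {w | w ≤ v}) (hσ : sourceSpec T v σ)
    (ht : t ≤ T) :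
    (nonFullBelow T t v = ∅ ∧ σ t = t) ∨
      ∃ a, IsGreatest (nonFullBelow T t v) a ∧ σ t = Function.update t a (t a + 1) := by
  rcases (nonFullBelow T t v).eq_empty_or_nonempty with h | h
  · exact .inl ⟨h, hσ.apply_of_nonFullBelow_eq_empty ht h⟩
  · obtain ⟨a, ha⟩ := exists_isGreatest_nonFullBelow hchain h
    exact .inr ⟨a, ha, hσ.apply_of_isGreatest ht ha⟩

lemma le_apply [Finite V] (hchain : IsChain (· ≤ ·) {w | w ≤ v}) (hσ : sourceSpec T v σ)
    (ht : t ≤ T) : t ≤ σ t := by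
  rcases hσ.apply_cases hchain ht with ⟨-, h⟩ | ⟨a, -, h⟩
  · exact h.ge
  · rw [h]
    exact le_update_self_iff.mpr (Nat.le_succ _)

lemma apply_eq_of_nonFullBelow_eq [Finite V] {σ' : (V → ℕ) → (V → ℕ)}
    (hchain : IsChain (· ≤ ·) {w | w ≤ u}) (hσ : sourceSpec T u σ) (hσ' : sourceSpec T v σ')
    (ht : t ≤ T) (h : nonFullBelow T t u = nonFullBelow T t v) : σ t = σ' t := by
  rcases hσ.apply_cases hchain ht with ⟨h₀, e⟩ | ⟨a, ha, e⟩
  · rw [e, hσ'.apply_of_nonFullBelow_eq_empty ht (h ▸ h₀)]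
  · rw [e, hσ'.apply_of_isGreatest ht (h ▸ ha)]

lemma comm [Finite V] {σ' : (V → ℕ) → (V → ℕ)} (hu : IsChain (· ≤ ·) {w | w ≤ u})
    (hv : IsChain (· ≤ ·) {w | w ≤ v}) (hσ : sourceSpec T u σ) (hσ' : sourceSpec T v σ')
    (ht : t ≤ T) : σ (σ' t) = σ' (σ t) := by
  rcases hσ'.apply_cases hv ht with ⟨hv₀, e'⟩ | ⟨a, ha, e'⟩ <;>
    rcases hσ.apply_cases hu ht with ⟨hu₀, e⟩ | ⟨b, hb, e⟩
  · rw [e', e, e']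
  · rw [e', e, hσ'.apply_of_nonFullBelow_eq_empty (update_add_one_le ht hb.1.2)
      (Set.subset_eq_empty nonFullBelow_update_add_one_subset hv₀)]
  · rw [e', e, e', hσ.apply_of_nonFullBelow_eq_empty (update_add_one_le ht ha.1.2)
      (Set.subset_eq_empty nonFullBelow_update_add_one_subset hu₀)]
  · rcases eq_or_ne a b with rfl | hab
    · rw [e', e]
      exact hσ.apply_eq_of_nonFullBelow_eq hu hσ' (update_add_one_le ht ha.1.2) <|
        (nonFullBelow_update_add_one_subset_of_isGreatest hb ha.1.1).antisymm
          (nonFullBelow_update_add_one_subset_of_isGreatest ha hb.1.1)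
    · rw [e', e, hσ.apply_of_isGreatest (update_add_one_le ht ha.1.2)
        (hb.nonFullBelow_update_add_one hab.symm), hσ'.apply_of_isGreatest
        (update_add_one_le ht hb.1.2) (ha.nonFullBelow_update_add_one hab),
        Function.update_of_ne hab, Function.update_of_ne hab.symm, Function.update_comm hab]

end sourceSpec

end Sandpile

theorem stmt10_general (V : Type*) [Fintype V] [PartialOrder V] [DecidableEq V]
    [DecidableRel ((· ≤ ·) : V → V → Prop)]
    (hchain : ∀ v : V, IsChain (· ≤ ·) {w | w ≤ v})
    (T : V → ℕ) (u v : V)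
    (σu σv : (V → ℕ) → (V → ℕ))
    (hσu : sourceSpec T u σu) (hσv : sourceSpec T v σv) :
    (∀ t : V → ℕ, (∀ w, t w ≤ T w) → σu (σv t) = σv (σu t)) ∧
    (∀ t : V → ℕ, (∀ w, t w ≤ T w) → domRel t (σv t)) :=
  ⟨fun _ ht => hσu.comm (hchain u) (hchain v) hσv ht,
    fun _ ht => domRel_of_le_s10 (hσv.le_apply (hchain v) ht)⟩

/-- the source operators pairwise commute, and each is increasing for
the dominance order: t ⊴ σ_v(t). -/
theorem stmt10 (V : Type*) [Fintype V] [PartialOrder V] [DecidableEq V]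
    [DecidableRel ((· ≤ ·) : V → V → Prop)]
    (hroot : ∃ r : V, ∀ v, r ≤ v)
    (hchain : ∀ v : V, IsChain (· ≤ ·) {w | w ≤ v})
    (T : V → ℕ) (hT : ∀ v, 1 ≤ T v) (u v : V)
    (σu σv : (V → ℕ) → (V → ℕ))
    (hσu : sourceSpec T u σu) (hσv : sourceSpec T v σv) :
    (∀ t : V → ℕ, (∀ w, t w ≤ T w) → σu (σv t) = σv (σu t)) ∧
    (∀ t : V → ℕ, (∀ w, t w ≤ T w) → domRel t (σv t)) :=
  stmt10_general V hchain T u v σu σv hσu hσv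
end

section
/- Let M' be an |Ω'|×|Ω'| column-stochastic matrix with stationary vector P' (M'P' = P'), let ψ be a column-stochastic |Ω'|×|Ω'| matrix, let T ≥ 1, x₀, y₀ > 0, and let A = (1-x₀)M' - y₀ψ. Define the (T+1)×(T+1) block tridiagonal matrix M with diagonal blocks (x₀I + A, A, ..., A, y₀ψ + A), subdiagonal blocks all y₀I, and superdiagonal blocks all x₀ψ. Define π(h) = y₀^h x₀^{T-h} / Σ_{i=0}^{T} y₀^i x₀^{T-i}. Then the block vector P = (π(0)P', π(1)P', ..., π(T)P')ᵀ satisfies M P = P. -/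
/-- the block-tridiagonal matrix M with diagonal blocks
(x₀I + A, A, …, A, y₀ψ + A), subdiagonal blocks y₀I, superdiagonal blocks x₀ψ,
where A = (1-x₀)M' - y₀ψ, fixes the block vector P = (π(0)P', …, π(T)P')ᵀ, where
π(h) = y₀ʰ x₀^{T-h} / Σᵢ y₀ⁱ x₀^{T-i} and M'P' = P'. -/
theorem stmt19 (Ω' : Type*) [Fintype Ω'] [DecidableEq Ω'] (T : ℕ) (hT : 1 ≤ T)
    (x0 y0 : ℝ) (hx0 : 0 < x0) (hy0 : 0 < y0)
    (M' ψ : Matrix Ω' Ω' ℝ)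
    (hM'col : ∀ j, ∑ i, M' i j = 1) (hM'nn : ∀ i j, 0 ≤ M' i j)
    (hψcol : ∀ j, ∑ i, ψ i j = 1) (hψnn : ∀ i j, 0 ≤ ψ i j)
    (P' : Ω' → ℝ) (hP' : M'.mulVec P' = P')
    (A : Matrix Ω' Ω' ℝ) (hA : A = (1 - x0) • M' - y0 • ψ)
    (π : ℕ → ℝ)
    (hπ : ∀ h, π h = y0 ^ h * x0 ^ (T - h) / ∑ i ∈ Finset.range (T + 1), y0 ^ i * x0 ^ (T - i))
    (Mbig : Matrix (Fin (T + 1) × Ω') (Fin (T + 1) × Ω') ℝ)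
    (hMbig : ∀ (h h' : Fin (T + 1)) (i j : Ω'),
      Mbig (h, i) (h', j) =
        if h = h' then
          (if (h : ℕ) = 0 then x0 * (if i = j then 1 else 0) else 0) +
          (if (h : ℕ) = T then y0 * ψ i j else 0) + A i j
        else if (h : ℕ) = (h' : ℕ) + 1 then y0 * (if i = j then 1 else 0)
        else if (h' : ℕ) = (h : ℕ) + 1 then x0 * ψ i j
        else 0)
    (P : Fin (T + 1) × Ω' → ℝ) (hP : ∀ h i, P (h, i) = π (h : ℕ) * P' i) :
    Mbig.mulVec P = P := by
  funext x
  obtain ⟨h, i⟩ := x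
  set s : ℝ := ∑ j, ψ i j * P' j with hs
  have hMs : ∑ j, M' i j * P' j = P' i := by
    have := congrFun hP' i
    simpa [Matrix.mulVec, dotProduct] using this
  have hδ : ∑ j, (if i = j then (1:ℝ) else 0) * P' j = P' i := by
    simp [ite_mul]
  have hrec : ∀ k, k + 1 ≤ T → x0 * π (k+1) = y0 * π k := by
    intro k hk
    rw [hπ, hπ]
    have h1 : T - k = (T - (k+1)) + 1 := by omega
    rw [h1, pow_succ]
    ring
  have hgen : ∀ c1 c2 : ℝ,
      (∑ j, (c1 * (if i = j then (1:ℝ) else 0) + c2 * ψ i j + A i j) * (π ↑h * P' j))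
        = (c1 * P' i + c2 * s + ((1 - x0) * P' i - y0 * s)) * π ↑h := by
    intro c1 c2
    have e : ∀ j, (c1 * (if i = j then (1:ℝ) else 0) + c2 * ψ i j + A i j) * (π ↑h * P' j)
        = (c1 * π ↑h) * ((if i = j then (1:ℝ) else 0) * P' j)
          + ((c2 - y0) * π ↑h) * (ψ i j * P' j)
          + ((1 - x0) * π ↑h) * (M' i j * P' j) := by
      intro j
      rw [hA]
      simp only [Matrix.sub_apply, Matrix.smul_apply, smul_eq_mul]
      ring
    rw [Finset.sum_congr rfl fun j _ => e j, Finset.sum_add_distrib, Finset.sum_add_distrib,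
      ← Finset.mul_sum, ← Finset.mul_sum, ← Finset.mul_sum, hδ, hMs, ← hs]
    ring
  have key : ∀ h' : Fin (T+1),
      (∑ j, Mbig (h, i) (h', j) * P (h', j))
        = (if (h:ℕ) = ↑h' then
            ((if (h:ℕ) = 0 then x0 * P' i else 0) + (if (h:ℕ) = T then y0 * s else 0)
              + ((1 - x0) * P' i - y0 * s)) * π ↑h else 0)
          + (if (h:ℕ) = ↑h' + 1 then y0 * π ↑h' * P' i else 0)
          + (if (↑h' : ℕ) = (h:ℕ) + 1 then x0 * π ↑h' * s else 0) := by
    intro h'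
    simp only [hMbig, hP]
    by_cases h1 : h = h'
    · subst h1
      have n2 : ¬((h:ℕ) = (h:ℕ) + 1) := by omega
      simp only [eq_self_iff_true, if_true, eq_false n2, if_false, add_zero]
      by_cases hc0 : (h:ℕ) = 0 <;> by_cases hcT : (h:ℕ) = T
      · exfalso; omega
      · simp only [eq_true hc0, eq_false hcT, if_true, if_false]
        exact (Finset.sum_congr rfl fun j _ => by ring).trans ((hgen x0 0).trans (by ring))
      · simp only [eq_false hc0, eq_true hcT, if_true, if_false]
        exact (Finset.sum_congr rfl fun j _ => by ring).trans ((hgen 0 y0).trans (by ring))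
      · simp only [eq_false hc0, eq_false hcT, if_false]
        exact (Finset.sum_congr rfl fun j _ => by ring).trans ((hgen 0 0).trans (by ring))
    · have n1 : ¬((h:ℕ) = ↑h') := fun e => h1 (Fin.ext e)
      simp only [eq_false h1, eq_false n1, if_false, zero_add]
      by_cases h2 : (h:ℕ) = ↑h' + 1
      · have n3 : ¬((↑h' : ℕ) = (h:ℕ) + 1) := by omega
        simp only [eq_true h2, eq_false n3, if_true, if_false, add_zero]
        calc ∑ j, (y0 * (if i = j then (1:ℝ) else 0)) * (π ↑h' * P' j)
            = ∑ j, (y0 * π ↑h') * ((if i = j then (1:ℝ) else 0) * P' j) :=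
              Finset.sum_congr rfl fun j _ => by ring
          _ = (y0 * π ↑h') * ∑ j, (if i = j then (1:ℝ) else 0) * P' j := by
              rw [Finset.mul_sum]
          _ = _ := by rw [hδ]
      · simp only [eq_false h2, if_false, zero_add]
        by_cases h3 : (↑h' : ℕ) = (h:ℕ) + 1
        · simp only [eq_true h3, if_true]
          calc ∑ j, (x0 * ψ i j) * (π ↑h' * P' j)
              = ∑ j, (x0 * π ↑h') * (ψ i j * P' j) :=
                Finset.sum_congr rfl fun j _ => by ring
            _ = (x0 * π ↑h') * ∑ j, ψ i j * P' j := by rw [Finset.mul_sum]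
            _ = _ := by rw [← hs]
        · simp only [eq_false h3, if_false]
          simp
  have main : Mbig.mulVec P (h, i)
      = ∑ k ∈ Finset.range (T+1),
          ((if (h:ℕ) = k then
            ((if (h:ℕ) = 0 then x0 * P' i else 0) + (if (h:ℕ) = T then y0 * s else 0)
              + ((1 - x0) * P' i - y0 * s)) * π ↑h else 0)
          + (if (h:ℕ) = k + 1 then y0 * π k * P' i else 0)
          + (if k = (h:ℕ) + 1 then x0 * π k * s else 0)) := by
    calc Mbig.mulVec P (h, i)
        = ∑ h' : Fin (T+1), ∑ j, Mbig (h, i) (h', j) * P (h', j) := by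
          simp only [Matrix.mulVec, dotProduct]
          rw [Fintype.sum_prod_type]
      _ = ∑ h' : Fin (T+1),
          ((if (h:ℕ) = ↑h' then
            ((if (h:ℕ) = 0 then x0 * P' i else 0) + (if (h:ℕ) = T then y0 * s else 0)
              + ((1 - x0) * P' i - y0 * s)) * π ↑h else 0)
          + (if (h:ℕ) = ↑h' + 1 then y0 * π ↑h' * P' i else 0)
          + (if (↑h' : ℕ) = (h:ℕ) + 1 then x0 * π ↑h' * s else 0)) :=
            Finset.sum_congr rfl fun h' _ => key h'
      _ = _ := Fin.sum_univ_eq_sum_range (fun k =>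
          (if (h:ℕ) = k then
            ((if (h:ℕ) = 0 then x0 * P' i else 0) + (if (h:ℕ) = T then y0 * s else 0)
              + ((1 - x0) * P' i - y0 * s)) * π ↑h else 0)
          + (if (h:ℕ) = k + 1 then y0 * π k * P' i else 0)
          + (if k = (h:ℕ) + 1 then x0 * π k * s else 0)) (T+1)
  rw [main, hP]
  rw [Finset.sum_add_distrib, Finset.sum_add_distrib]
  have S1 : (∑ k ∈ Finset.range (T+1), if (h:ℕ) = k then
        ((if (h:ℕ) = 0 then x0 * P' i else 0) + (if (h:ℕ) = T then y0 * s else 0)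
          + ((1 - x0) * P' i - y0 * s)) * π ↑h else 0)
      = ((if (h:ℕ) = 0 then x0 * P' i else 0) + (if (h:ℕ) = T then y0 * s else 0)
          + ((1 - x0) * P' i - y0 * s)) * π ↑h := by
    rw [Finset.sum_ite_eq, if_pos (Finset.mem_range.mpr h.isLt)]
  have S3 : (∑ k ∈ Finset.range (T+1), if k = (h:ℕ) + 1 then x0 * π k * s else 0)
      = if (h:ℕ) + 1 ∈ Finset.range (T+1) then x0 * π ((h:ℕ)+1) * s else 0 :=
    Finset.sum_ite_eq' _ _ _
  rw [S1, S3]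
  by_cases hh0 : (h:ℕ) = 0
  · have hhT : ¬((h:ℕ) = T) := by omega
    have S2 : (∑ k ∈ Finset.range (T+1), if (h:ℕ) = k + 1 then y0 * π k * P' i else 0) = 0 := by
      apply Finset.sum_eq_zero
      intro k _
      rw [if_neg (by omega)]
    have hmem : (h:ℕ) + 1 ∈ Finset.range (T+1) := Finset.mem_range.mpr (by omega)
    rw [S2, if_pos hmem, if_pos hh0, if_neg hhT, hh0]
    linear_combination s * hrec 0 (by omega)
  · obtain ⟨m, hm⟩ : ∃ m, (h:ℕ) = m + 1 := ⟨(h:ℕ)-1, by omega⟩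
    have hmlt : m ∈ Finset.range (T+1) := Finset.mem_range.mpr (by omega)
    have S2 : (∑ k ∈ Finset.range (T+1), if (h:ℕ) = k + 1 then y0 * π k * P' i else 0)
        = y0 * π m * P' i := by
      calc (∑ k ∈ Finset.range (T+1), if (h:ℕ) = k + 1 then y0 * π k * P' i else 0)
          = ∑ k ∈ Finset.range (T+1), if m = k then y0 * π k * P' i else 0 :=
            Finset.sum_congr rfl fun k _ => by
              rw [if_congr (by omega : ((h:ℕ) = k + 1) ↔ m = k) rfl rfl]
        _ = y0 * π m * P' i := by rw [Finset.sum_ite_eq, if_pos hmlt]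
    rw [S2, if_neg hh0]
    by_cases hhT : (h:ℕ) = T
    · have nmem : ¬((h:ℕ) + 1 ∈ Finset.range (T+1)) := by
        simp only [Finset.mem_range]; omega
      rw [if_pos hhT, if_neg nmem, hm]
      have hm1 : m + 1 ≤ T := by omega
      linear_combination (-(P' i)) * hrec m hm1
    · have hmem : (h:ℕ) + 1 ∈ Finset.range (T+1) := Finset.mem_range.mpr (by omega)
      rw [if_neg hhT, if_pos hmem, hm]
      have hm1 : m + 1 ≤ T := by omega
      have hm2 : (m + 1) + 1 ≤ T := by omega
      linear_combination (-(P' i)) * hrec m hm1 + s * hrec (m+1) hm2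
end
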